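/- Let B : C(N,ℝ) → C(M,ℝ) be a multiplicative map between algebras of continuous functions on topological spaces, let x ∈ M and y ∈ N, and suppose there are functions f ∈ C(M,ℝ), g₀ ∈ C(N,ℝ) with B(g₀) = f, f equal to 1 on a neighbourhood of x, and supp(g₀) contained in a neighbourhood V of y. Then for any g, h ∈ C(N,ℝ) that agree on supp(g₀), the functions B(g) and B(h) agree on the neighbourhood of x where f = 1. -/
import Mathlib

/-- Let `B` be a multiplicative map between algebras of
continuous functions, `x ∈ M`, `y ∈ N`, `f = B g₀` with `f = 1` on a
neighbourhood `W` of `x` and `supp g₀ ⊆ V` for a neighbourhood `V` of `y`.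
Then any `g, h` agreeing on `supp g₀` satisfy `B g = B h` on the set where
`f = 1`. -/
theorem stmt11 {M N : Type*} [TopologicalSpace M] [TopologicalSpace N]
    (B : C(N, ℝ) → C(M, ℝ)) (hmul : ∀ g h : C(N, ℝ), B (g * h) = B g * B h)
    (x : M) (y : N) (f : C(M, ℝ)) (g₀ : C(N, ℝ)) (hBg₀ : B g₀ = f)
    (W : Set M) (hW : W ∈ nhds x) (hfW : ∀ z ∈ W, f z = 1)
    (V : Set N) (hV : V ∈ nhds y) (hsupp : tsupport ⇑g₀ ⊆ V) :
    ∀ g h : C(N, ℝ), (∀ z ∈ tsupport ⇑g₀, g z = h z) →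
      ∀ z : M, f z = 1 → B g z = B h z := by
  intro g h hgh z hz
  have key : g * g₀ = h * g₀ := by
    ext w
    by_cases hw : w ∈ tsupport ⇑g₀
    · simp [hgh w hw]
    · simp [image_eq_zero_of_notMem_tsupport hw]
  have : B g * f = B h * f := by rw [← hBg₀, ← hmul, ← hmul, key]
  have := congrFun (congrArg DFunLike.coe this) z
  simpa [hz] using this
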